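/- Main theorem, complex case: let φ be a traceless 3×3 complex matrix, ρ ∈ ℝ, A and B Hermitian 3×3 complex matrices, X and Y Hermitian 3×3 complex matrices, and p, q ∈ ℝ. Then the symplectic action of the 6×6 matrix Θ(φ,ρ,A,B) on the antisymmetric tensor P(X,Y,p,q) equals the tensor built from the Freudenthal action: Θ(φ,ρ,A,B)·P(X,Y,p,q) = P(X',Y',p',q'), where X' = φX + Xφ† + (ρ/3)X + 2·B*Y + qA, Y' = 2·A*X − φ†Y − Yφ − (ρ/3)Y + pB, p' = tr(A∘Y) − ρp, and q' = tr(B∘X) + ρq. -/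

import Mathlib

open Matrix BigOperators

/-- 3×3 complex matrices. -/
abbrev Mat3 := Matrix (Fin 3) (Fin 3) ℂ

/-- Sign of an integer, valued in ℤ. -/
def sgnZ (n : ℤ) : ℤ := if 0 < n then 1 else if n < 0 then -1 else 0

/-- The Levi-Civita symbol on `Fin 3`. -/
def eps (a b c : Fin 3) : ℤ :=
  sgnZ ((b : ℤ) - (a : ℤ)) * sgnZ ((c : ℤ) - (a : ℤ)) * sgnZ ((c : ℤ) - (b : ℤ))

/-- The cubie of a 3×3 matrix: (*X)_{abc} = X_a^m ε_{mbc}. -/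
noncomputable def cubie (X : Mat3) (a b c : Fin 3) : ℂ :=
  ∑ m, X a m * ((eps m b c : ℤ) : ℂ)

/-- The Jordan product X∘Y = (XY+YX)/2. -/
noncomputable def jord (X Y : Mat3) : Mat3 := (1/2 : ℂ) • (X * Y + Y * X)

/-- The Freudenthal product. -/
noncomputable def freud (X Y : Mat3) : Mat3 :=
  jord X Y - (1/2 : ℂ) • (X.trace • Y + Y.trace • X)
    + (1/2 : ℂ) • (X.trace * Y.trace - (jord X Y).trace) • (1 : Mat3)

/-- Reduce an index in {1,...,6} to an index in {1,2,3}: for a "large" index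
(value ≥ 4, i.e. `Fin 6` value ≥ 3) this is a−3; "small" indices are unchanged. -/
def lo (a : Fin 6) : Fin 3 := ⟨a.val % 3, Nat.mod_lt _ (by norm_num)⟩

/-- The totally antisymmetric rank-3 tensor P(X,Y,p,q) on indices in {1,...,6}:
its 000 cubie is p·ε, its 100 cubie is *Y, its 011 cubie is *X, its 111 cubie
is q·ε, and all other components are determined by total antisymmetry
(using that (*X)_{abc} is antisymmetric in its last two indices). -/
noncomputable def PT (X Y : Mat3) (p q : ℂ) : Fin 6 → Fin 6 → Fin 6 → ℂ := fun a b c =>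
  if a.val < 3 then
    if b.val < 3 then
      if c.val < 3 then p * ((eps (lo a) (lo b) (lo c) : ℤ) : ℂ)  -- (s,s,s)
      else cubie Y (lo c) (lo a) (lo b)                            -- (s,s,l) = +P_{cab}
    else
      if c.val < 3 then -(cubie Y (lo b) (lo a) (lo c))            -- (s,l,s) = −P_{bac}
      else cubie X (lo a) (lo b) (lo c)                            -- (s,l,l)
  else
    if b.val < 3 then
      if c.val < 3 then cubie Y (lo a) (lo b) (lo c)               -- (l,s,s)
      else -(cubie X (lo b) (lo a) (lo c))                         -- (l,s,l) = −P_{bac}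
    else
      if c.val < 3 then cubie X (lo c) (lo a) (lo b)               -- (l,l,s) = +P_{cab}
      else q * ((eps (lo a) (lo b) (lo c) : ℤ) : ℂ)                -- (l,l,l)

/-- The action of a 6×6 matrix Θ on a rank-3 tensor:
(Θ·P)_{abc} = Θ_a^m P_{mbc} + Θ_b^m P_{amc} + Θ_c^m P_{abm}. -/
noncomputable def act (Θ : Matrix (Fin 6) (Fin 6) ℂ) (P : Fin 6 → Fin 6 → Fin 6 → ℂ) :
    Fin 6 → Fin 6 → Fin 6 → ℂ := fun a b c =>
  (∑ m, Θ a m * P m b c) + (∑ m, Θ b m * P a m c) + (∑ m, Θ c m * P a b m)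

/-- The 6×6 block matrix Θ(φ,ρ,A,B) = [[φ − (ρ/3)I, A],[B, −φ† + (ρ/3)I]]. -/
noncomputable def ThetaM (φ : Mat3) (ρ : ℝ) (A B : Mat3) : Matrix (Fin 6) (Fin 6) ℂ :=
  Matrix.reindex finSumFinEquiv finSumFinEquiv
    (Matrix.fromBlocks (φ - ((ρ : ℂ)/3) • 1) A B (-φᴴ + ((ρ : ℂ)/3) • 1))

/-!
Split `Fin 6` as `Fin 3 ⊕ Fin 3` (`castAdd`/`natAdd`). Then `Θ` has the blocks `φ - ρ/3`, `A`, `B`,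
`-φ† + ρ/3`, and every component of `P` is a multiple of `ε` or a cubie. Both sides are totally
antisymmetric, so it suffices to compare them when the index blocks are (1,1,1), (2,1,1), (1,2,2)
and (2,2,2). There everything follows from three contractions of `ε`: a matrix acting on the first
slot of a cubie multiplies it from the left; a matrix `M` acting on the last two slots gives
`tr M` times the cubie minus right multiplication by `M`; and the antisymmetrised contraction of
`A` with `*X` is `2 *(A * X)`, the cubie of the Freudenthal product. Since `φ` is traceless the
diagonal blocks have traces `-ρ` and `ρ`.
-/

structure IsAlternating {ι R : Type*} [Neg R] (T : ι → ι → ι → R) : Prop where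
  swap_left : ∀ a b c, T b a c = -T a b c
  swap_right : ∀ a b c, T a c b = -T a b c

namespace IsAlternating

variable {R : Type*} [InvolutiveNeg R]

lemma cycle {ι : Type*} {T : ι → ι → ι → R} (hT : IsAlternating T) (a b c : ι) :
    T a b c = T c a b := by
  rw [hT.swap_left a c b, hT.swap_right a b c, neg_neg]

lemma ext_fin_add {m n : ℕ} {T T' : Fin (m + n) → Fin (m + n) → Fin (m + n) → R}
    (hT : IsAlternating T) (hT' : IsAlternating T')
    (h₀ : ∀ a b c, T (Fin.castAdd n a) (Fin.castAdd n b) (Fin.castAdd n c)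
      = T' (Fin.castAdd n a) (Fin.castAdd n b) (Fin.castAdd n c))
    (h₁ : ∀ a b c, T (Fin.natAdd m a) (Fin.castAdd n b) (Fin.castAdd n c)
      = T' (Fin.natAdd m a) (Fin.castAdd n b) (Fin.castAdd n c))
    (h₂ : ∀ a b c, T (Fin.castAdd n a) (Fin.natAdd m b) (Fin.natAdd m c)
      = T' (Fin.castAdd n a) (Fin.natAdd m b) (Fin.natAdd m c))
    (h₃ : ∀ a b c, T (Fin.natAdd m a) (Fin.natAdd m b) (Fin.natAdd m c)
      = T' (Fin.natAdd m a) (Fin.natAdd m b) (Fin.natAdd m c)) :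
    T = T' := by
  funext x y z
  cases x using Fin.addCases <;> cases y using Fin.addCases <;> cases z using Fin.addCases
  · exact h₀ ..
  · rw [hT.cycle, hT'.cycle, h₁]
  · rw [hT.swap_left, hT'.swap_left, h₁]
  · exact h₂ ..
  · exact h₁ ..
  · rw [hT.swap_left, hT'.swap_left, h₂]
  · rw [hT.cycle, hT'.cycle, h₂]
  · exact h₃ ..

end IsAlternating

lemma isAlternating_act (Θ : Matrix (Fin 6) (Fin 6) ℂ) {P : Fin 6 → Fin 6 → Fin 6 → ℂ}
    (hP : IsAlternating P) : IsAlternating (act Θ P) where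
  swap_left a b c := by
    have h₁ : ∀ m, P m a c = -P a m c := fun m => hP.swap_left a m c
    have h₂ : ∀ m, P b m c = -P m b c := fun m => hP.swap_left m b c
    have h₃ : ∀ m, P b a m = -P a b m := fun m => hP.swap_left a b m
    simp only [act, h₁, h₂, h₃, mul_neg, Finset.sum_neg_distrib]
    ring
  swap_right a b c := by
    have h₁ : ∀ m, P m c b = -P m b c := fun m => hP.swap_right m b c
    have h₂ : ∀ m, P a m b = -P a b m := fun m => hP.swap_right a b m
    have h₃ : ∀ m, P a c m = -P a m c := fun m => hP.swap_right a m c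
    simp only [act, h₁, h₂, h₃, mul_neg, Finset.sum_neg_distrib]
    ring

lemma eps_swap_left (a b c : Fin 3) : eps b a c = -eps a b c := by revert a b c; decide

lemma eps_swap_right (a b c : Fin 3) : eps a c b = -eps a b c := by revert a b c; decide

-- The infinitesimal form of `ε (M ·) (M ·) (M ·) = det M • ε`.
lemma sum_mul_eps_cyclic (M : Mat3) (a b c : Fin 3) :
    ∑ m, M a m * eps m b c + ∑ m, M b m * eps a m c + ∑ m, M c m * eps a b m
      = M.trace * eps a b c := by
  fin_cases a <;> fin_cases b <;> fin_cases c <;>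
    simp [Fin.sum_univ_three, trace_fin_three, eps, sgnZ] <;> ring

lemma sum_mul_mul_eps_cyclic (M : Mat3) (r : ℂ) (a b c : Fin 3) :
    ∑ m, M a m * (r * eps m b c) + ∑ m, M b m * (r * eps a m c) + ∑ m, M c m * (r * eps a b m)
      = r * (M.trace * eps a b c) := by
  simp only [mul_left_comm _ r, ← Finset.mul_sum, ← sum_mul_eps_cyclic]; ring

section Cubie

variable (M N : Mat3) (a b c : Fin 3)

lemma cubie_swap : cubie M a c b = -cubie M a b c := by
  simp [cubie, fun m => eps_swap_right m b c]

@[simp] lemma cubie_add : cubie (M + N) a b c = cubie M a b c + cubie N a b c := by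
  simp [cubie, add_mul, Finset.sum_add_distrib]

@[simp] lemma cubie_sub : cubie (M - N) a b c = cubie M a b c - cubie N a b c := by
  simp [cubie, sub_mul, Finset.sum_sub_distrib]

@[simp] lemma cubie_neg : cubie (-M) a b c = -cubie M a b c := by
  simp [cubie, Finset.sum_neg_distrib]

@[simp] lemma cubie_smul (r : ℂ) : cubie (r • M) a b c = r * cubie M a b c := by
  simp [cubie, Finset.mul_sum, mul_assoc]

lemma cubie_cyclic_sum : cubie M a b c + cubie M b c a + cubie M c a b = M.trace * eps a b c := by
  have h₁ : ∀ m, eps m c a = eps a m c := fun m => by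
    rw [eps_swap_right, eps_swap_left, neg_neg]
  have h₂ : ∀ m, eps m a b = eps a b m := fun m => by
    rw [eps_swap_left, eps_swap_right, neg_neg]
  simp only [cubie, h₁, h₂]
  exact sum_mul_eps_cyclic M a b c

lemma sum_mul_cubie : ∑ m, M a m * cubie N m b c = cubie (M * N) a b c := by
  simp only [cubie, Matrix.mul_apply, Finset.mul_sum, Finset.sum_mul, mul_assoc]
  exact Finset.sum_comm

lemma sum_mul_cubie_add_sum_mul_cubie :
    ∑ m, M b m * cubie N a m c + ∑ m, M c m * cubie N a b m
      = M.trace * cubie N a b c - cubie (N * M) a b c := by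
  have key : ∀ n, ∑ m, M b m * eps n m c + ∑ m, M c m * eps n b m
      = M.trace * eps n b c - cubie M n b c := fun n => by
    rw [cubie]
    linear_combination sum_mul_eps_cyclic M n b c
  calc _ = ∑ n, N a n * (∑ m, M b m * eps n m c + ∑ m, M c m * eps n b m) := by
        simp only [cubie, Finset.mul_sum, mul_add, Finset.sum_add_distrib]
        rw [Finset.sum_comm, Finset.sum_comm (γ := Fin 3) (f := fun m n => M c m * _)]
        simp only [mul_left_comm]
    _ = ∑ n, N a n * (M.trace * eps n b c - cubie M n b c) := by simp only [key]
    _ = ∑ n, (M.trace * (N a n * eps n b c) - N a n * cubie M n b c) := by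
        simp only [mul_sub, mul_left_comm]
    _ = _ := by rw [Finset.sum_sub_distrib, ← Finset.mul_sum, sum_mul_cubie]; rfl

-- `2 (M * N)` is the polarisation of the adjugate `X * X = adj X` (Cayley–Hamilton), which is
-- what this double `ε`-contraction computes.
lemma two_mul_cubie_freud :
    ∑ m, M b m * cubie N c a m - ∑ m, M c m * cubie N b a m = 2 * cubie (freud M N) a b c := by
  fin_cases a <;> fin_cases b <;> fin_cases c <;>
    simp only [cubie, freud, jord, Fin.sum_univ_three, trace_fin_three, Matrix.mul_apply,
      Matrix.one_apply, Matrix.add_apply, Matrix.sub_apply, Matrix.smul_apply, smul_eq_mul,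
      Fin.isValue, Fin.reduceFinMk, Fin.reduceEq, if_true, if_false] <;>
    norm_num [eps, sgnZ] <;> ring

end Cubie

lemma trace_jord (A Y : Mat3) : (jord A Y).trace = (A * Y).trace := by
  rw [jord, trace_smul, trace_add, trace_mul_comm Y A, smul_eq_mul]; ring

lemma Fin.sum_univ_three_add_three (f : Fin 6 → ℂ) :
    ∑ m, f m = ∑ i : Fin 3, f (Fin.castAdd 3 i) + ∑ i : Fin 3, f (Fin.natAdd 3 i) :=
  Fin.sum_univ_add (a := 3) (b := 3) f

section Blocks

variable (i j k : Fin 3)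

lemma lo_castAdd : lo (Fin.castAdd 3 i) = i := Fin.ext (Nat.mod_eq_of_lt i.isLt)

lemma lo_natAdd : lo (Fin.natAdd 3 i) = i := Fin.ext (by simp [lo, Fin.natAdd])

variable (φ : Mat3) (ρ : ℝ) (A B : Mat3)

lemma ThetaM_castAdd_castAdd :
    ThetaM φ ρ A B (Fin.castAdd 3 i) (Fin.castAdd 3 j) = (φ - ((ρ : ℂ) / 3) • 1) i j := by
  simp only [ThetaM, reindex_apply, submatrix_apply, finSumFinEquiv_symm_apply_castAdd]
  rfl

lemma ThetaM_castAdd_natAdd : ThetaM φ ρ A B (Fin.castAdd 3 i) (Fin.natAdd 3 j) = A i j := by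
  simp only [ThetaM, reindex_apply, submatrix_apply, finSumFinEquiv_symm_apply_castAdd,
    finSumFinEquiv_symm_apply_natAdd]
  rfl

lemma ThetaM_natAdd_castAdd : ThetaM φ ρ A B (Fin.natAdd 3 i) (Fin.castAdd 3 j) = B i j := by
  simp only [ThetaM, reindex_apply, submatrix_apply, finSumFinEquiv_symm_apply_castAdd,
    finSumFinEquiv_symm_apply_natAdd]
  rfl

lemma ThetaM_natAdd_natAdd :
    ThetaM φ ρ A B (Fin.natAdd 3 i) (Fin.natAdd 3 j) = (-φᴴ + ((ρ : ℂ) / 3) • 1) i j := by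
  simp only [ThetaM, reindex_apply, submatrix_apply, finSumFinEquiv_symm_apply_natAdd]
  rfl

variable (X Y : Mat3) (p q : ℂ)

lemma PT_castAdd_castAdd_castAdd :
    PT X Y p q (Fin.castAdd 3 i) (Fin.castAdd 3 j) (Fin.castAdd 3 k) = p * eps i j k := by
  simp [PT, lo_castAdd]

lemma PT_natAdd_castAdd_castAdd :
    PT X Y p q (Fin.natAdd 3 i) (Fin.castAdd 3 j) (Fin.castAdd 3 k) = cubie Y i j k := by
  simp [PT, lo_castAdd, lo_natAdd, -Fin.natAdd_eq_addNat]

lemma PT_castAdd_natAdd_castAdd :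
    PT X Y p q (Fin.castAdd 3 i) (Fin.natAdd 3 j) (Fin.castAdd 3 k) = -cubie Y j i k := by
  simp [PT, lo_castAdd, lo_natAdd, -Fin.natAdd_eq_addNat]

lemma PT_castAdd_castAdd_natAdd :
    PT X Y p q (Fin.castAdd 3 i) (Fin.castAdd 3 j) (Fin.natAdd 3 k) = cubie Y k i j := by
  simp [PT, lo_castAdd, lo_natAdd, -Fin.natAdd_eq_addNat]

lemma PT_castAdd_natAdd_natAdd :
    PT X Y p q (Fin.castAdd 3 i) (Fin.natAdd 3 j) (Fin.natAdd 3 k) = cubie X i j k := by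
  simp [PT, lo_castAdd, lo_natAdd, -Fin.natAdd_eq_addNat]

lemma PT_natAdd_castAdd_natAdd :
    PT X Y p q (Fin.natAdd 3 i) (Fin.castAdd 3 j) (Fin.natAdd 3 k) = -cubie X j i k := by
  simp [PT, lo_castAdd, lo_natAdd, -Fin.natAdd_eq_addNat]

lemma PT_natAdd_natAdd_castAdd :
    PT X Y p q (Fin.natAdd 3 i) (Fin.natAdd 3 j) (Fin.castAdd 3 k) = cubie X k i j := by
  simp [PT, lo_castAdd, lo_natAdd, -Fin.natAdd_eq_addNat]

lemma PT_natAdd_natAdd_natAdd :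
    PT X Y p q (Fin.natAdd 3 i) (Fin.natAdd 3 j) (Fin.natAdd 3 k) = q * eps i j k := by
  simp [PT, lo_natAdd, -Fin.natAdd_eq_addNat]

end Blocks

section Components

variable {φ : Mat3} (hφ : φ.trace = 0) (ρ : ℝ) (A B X Y : Mat3) (p q : ℂ) (a b c : Fin 3)
include hφ

lemma trace_sub_smul_one_of_trace_eq_zero : (φ - ((ρ : ℂ) / 3) • 1).trace = -ρ := by
  simp [hφ]

lemma trace_neg_conjTranspose_add_smul_one_of_trace_eq_zero :
    (-φᴴ + ((ρ : ℂ) / 3) • 1).trace = ρ := by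
  simp [trace_conjTranspose, hφ]

lemma act_ThetaM_PT_castAdd_castAdd_castAdd :
    act (ThetaM φ ρ A B) (PT X Y p q) (Fin.castAdd 3 a) (Fin.castAdd 3 b) (Fin.castAdd 3 c)
      = ((jord A Y).trace - ρ * p) * eps a b c := by
  simp only [act, Fin.sum_univ_three_add_three, ThetaM_castAdd_castAdd, ThetaM_castAdd_natAdd,
    PT_castAdd_castAdd_castAdd, PT_natAdd_castAdd_castAdd, PT_castAdd_natAdd_castAdd,
    PT_castAdd_castAdd_natAdd, mul_neg, Finset.sum_neg_distrib, sum_mul_cubie,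
    cubie_swap (A * Y) b c a]
  rw [trace_jord]
  linear_combination sum_mul_mul_eps_cyclic (φ - ((ρ : ℂ) / 3) • 1) p a b c
    + cubie_cyclic_sum (A * Y) a b c + p * eps a b c * trace_sub_smul_one_of_trace_eq_zero hφ ρ

lemma act_ThetaM_PT_natAdd_castAdd_castAdd :
    act (ThetaM φ ρ A B) (PT X Y p q) (Fin.natAdd 3 a) (Fin.castAdd 3 b) (Fin.castAdd 3 c)
      = cubie ((2 : ℂ) • freud A X - φᴴ * Y - Y * φ - ((ρ : ℂ) / 3) • Y + p • B) a b c := by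
  simp only [act, Fin.sum_univ_three_add_three, ThetaM_castAdd_castAdd, ThetaM_castAdd_natAdd,
    ThetaM_natAdd_castAdd, ThetaM_natAdd_natAdd, PT_castAdd_castAdd_castAdd,
    PT_natAdd_castAdd_castAdd, PT_natAdd_natAdd_castAdd, PT_natAdd_castAdd_natAdd,
    mul_neg, Finset.sum_neg_distrib, sum_mul_cubie]
  have hB : ∑ i, B a i * (p * eps i b c) = p * cubie B a b c := by
    simp only [cubie, Finset.mul_sum, mul_left_comm p]
  have hYα : cubie (Y * (φ - ((ρ : ℂ) / 3) • 1)) a b c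
      = cubie (Y * φ) a b c - ρ / 3 * cubie Y a b c := by
    simp [mul_sub]
  simp only [hB, add_mul, neg_mul, smul_mul_assoc, one_mul, cubie_add, cubie_sub, cubie_neg,
    cubie_smul]
  linear_combination sum_mul_cubie_add_sum_mul_cubie (φ - ((ρ : ℂ) / 3) • 1) Y a b c
    + two_mul_cubie_freud A X a b c
    + cubie Y a b c * trace_sub_smul_one_of_trace_eq_zero hφ ρ - hYα

lemma act_ThetaM_PT_castAdd_natAdd_natAdd :
    act (ThetaM φ ρ A B) (PT X Y p q) (Fin.castAdd 3 a) (Fin.natAdd 3 b) (Fin.natAdd 3 c)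
      = cubie (φ * X + X * φᴴ + ((ρ : ℂ) / 3) • X + (2 : ℂ) • freud B Y + q • A) a b c := by
  simp only [act, Fin.sum_univ_three_add_three, ThetaM_castAdd_castAdd, ThetaM_castAdd_natAdd,
    ThetaM_natAdd_castAdd, ThetaM_natAdd_natAdd, PT_castAdd_natAdd_natAdd,
    PT_natAdd_natAdd_natAdd, PT_castAdd_castAdd_natAdd, PT_castAdd_natAdd_castAdd,
    mul_neg, Finset.sum_neg_distrib, sum_mul_cubie]
  have hA : ∑ i, A a i * (q * eps i b c) = q * cubie A a b c := by
    simp only [cubie, Finset.mul_sum, mul_left_comm q]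
  have hXδ : cubie (X * (-φᴴ + ((ρ : ℂ) / 3) • 1)) a b c
      = -cubie (X * φᴴ) a b c + ρ / 3 * cubie X a b c := by
    simp [mul_add]
  simp only [hA, sub_mul, smul_mul_assoc, one_mul, cubie_add, cubie_sub, cubie_smul]
  linear_combination sum_mul_cubie_add_sum_mul_cubie (-φᴴ + ((ρ : ℂ) / 3) • 1) X a b c
    + two_mul_cubie_freud B Y a b c
    + cubie X a b c * trace_neg_conjTranspose_add_smul_one_of_trace_eq_zero hφ ρ - hXδ

lemma act_ThetaM_PT_natAdd_natAdd_natAdd :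
    act (ThetaM φ ρ A B) (PT X Y p q) (Fin.natAdd 3 a) (Fin.natAdd 3 b) (Fin.natAdd 3 c)
      = ((jord B X).trace + ρ * q) * eps a b c := by
  simp only [act, Fin.sum_univ_three_add_three, ThetaM_natAdd_castAdd, ThetaM_natAdd_natAdd,
    PT_castAdd_natAdd_natAdd, PT_natAdd_castAdd_natAdd, PT_natAdd_natAdd_castAdd,
    PT_natAdd_natAdd_natAdd, mul_neg, Finset.sum_neg_distrib, sum_mul_cubie,
    cubie_swap (B * X) b c a]
  rw [trace_jord]
  linear_combination sum_mul_mul_eps_cyclic (-φᴴ + ((ρ : ℂ) / 3) • 1) q a b c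
    + cubie_cyclic_sum (B * X) a b c
    + q * eps a b c * trace_neg_conjTranspose_add_smul_one_of_trace_eq_zero hφ ρ

end Components

lemma isAlternating_PT (X Y : Mat3) (p q : ℂ) : IsAlternating (PT X Y p q) where
  swap_left a b c := by
    simp only [PT]
    split_ifs <;> simp only [neg_neg, eps_swap_left (lo a) (lo b) (lo c), Int.cast_neg, mul_neg,
      cubie_swap _ (lo c) (lo a) (lo b)]
  swap_right a b c := by
    simp only [PT]
    split_ifs <;> simp only [neg_neg, eps_swap_right (lo a) (lo b) (lo c), Int.cast_neg, mul_neg,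
      cubie_swap _ (lo a) (lo b) (lo c)]

theorem stmt8_general (φ : Mat3) (hφ : φ.trace = 0) (ρ : ℝ)
    (A B : Mat3)
    (X Y : Mat3) (p q : ℝ) :
    act (ThetaM φ ρ A B) (PT X Y (p : ℂ) (q : ℂ))
      = PT (φ * X + X * φᴴ + ((ρ : ℂ)/3) • X + (2 : ℂ) • freud B Y + (q : ℂ) • A)
           ((2 : ℂ) • freud A X - φᴴ * Y - Y * φ - ((ρ : ℂ)/3) • Y + (p : ℂ) • B)
           ((jord A Y).trace - (ρ : ℂ) * p)
           ((jord B X).trace + (ρ : ℂ) * q) := by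
  refine IsAlternating.ext_fin_add (m := 3) (n := 3)
    (isAlternating_act _ (isAlternating_PT X Y p q)) (isAlternating_PT _ _ _ _)
    ?_ ?_ ?_ ?_ <;> intro a b c
  · rw [act_ThetaM_PT_castAdd_castAdd_castAdd hφ, PT_castAdd_castAdd_castAdd]
  · rw [act_ThetaM_PT_natAdd_castAdd_castAdd hφ, PT_natAdd_castAdd_castAdd]
  · rw [act_ThetaM_PT_castAdd_natAdd_natAdd hφ, PT_castAdd_natAdd_natAdd]
  · rw [act_ThetaM_PT_natAdd_natAdd_natAdd hφ, PT_natAdd_natAdd_natAdd]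

/-- main theorem, complex case: for φ traceless, ρ real, A, B, X, Y
Hermitian, and p, q real, the symplectic action of Θ(φ,ρ,A,B) on P(X,Y,p,q) equals
the tensor built from the Freudenthal action:
Θ(φ,ρ,A,B)·P(X,Y,p,q) = P(X',Y',p',q') with
X' = φX + Xφ† + (ρ/3)X + 2·B*Y + qA, Y' = 2·A*X − φ†Y − Yφ − (ρ/3)Y + pB,
p' = tr(A∘Y) − ρp, q' = tr(B∘X) + ρq. -/
theorem stmt8 (φ : Mat3) (hφ : φ.trace = 0) (ρ : ℝ)
    (A B : Mat3) (hA : Aᴴ = A) (hB : Bᴴ = B)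
    (X Y : Mat3) (hX : Xᴴ = X) (hY : Yᴴ = Y) (p q : ℝ) :
    act (ThetaM φ ρ A B) (PT X Y (p : ℂ) (q : ℂ))
      = PT (φ * X + X * φᴴ + ((ρ : ℂ)/3) • X + (2 : ℂ) • freud B Y + (q : ℂ) • A)
           ((2 : ℂ) • freud A X - φᴴ * Y - Y * φ - ((ρ : ℂ)/3) • Y + (p : ℂ) • B)
           ((jord A Y).trace - (ρ : ℂ) * p)
           ((jord B X).trace + (ρ : ℂ) * q) :=
  stmt8_general φ hφ ρ A B X Y p q
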